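/- Suppose a rate function satisfies r(h) → ∞/h superlinearly, i.e. lim_{h→∞} r(h)/h = ∞, where r(h) = -log π(h) for a probability sequence π(h), and set L_h = ⌈5β·e^{r(h)}⌉. Then the set B = ⋃_{h≥1} ℕ ∩ [3L_h/4, L_h] satisfies Σ_{k∈B∩[1,n]} 1/k = o(log n). -/

import Mathlib

/-!
Each block `[3L/4, L]` carries harmonic mass at most `3`, and the blocks meeting `[1, n]` have
`L ≤ 3n`. Superlinearity of `r` makes `L_h` outgrow every exponential `e^{Mh}`, so apart from
finitely many `h` only `h ≤ log (3n) / M` can occur. Hence the harmonic sum over `B ∩ [1, n]`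
is at most `O_M(1) + (3 / M) log n` for every `M`, which is `o(log n)`.
-/

open Filter

section

open Finset Real

lemma sum_one_div_Icc_max_le_three (L : ℕ) :
    ∑ k ∈ Icc (max 1 (3 * L / 4)) L, 1 / (k : ℝ) ≤ 3 := by
  set a := max 1 (3 * L / 4)
  have ha : (0 : ℝ) < a := by positivity
  calc ∑ k ∈ Icc a L, 1 / (k : ℝ) ≤ #(Icc a L) • (1 / (a : ℝ)) :=
        sum_le_card_nsmul _ _ _ fun k hk =>
          one_div_le_one_div_of_le ha (by exact_mod_cast (mem_Icc.1 hk).1)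
    _ ≤ (3 * a : ℕ) * (1 / (a : ℝ)) := by
        rw [nsmul_eq_mul, Nat.card_Icc]
        gcongr
        omega
    _ = 3 := by push_cast; field_simp

lemma sum_indicator_Icc_le_three (L n : ℕ) :
    ∑ k ∈ Icc 1 n, (Set.Icc (3 * L / 4) L).indicator (fun k => 1 / (k : ℝ)) k ≤ 3 := by
  classical
  calc ∑ k ∈ Icc 1 n, (Set.Icc (3 * L / 4) L).indicator (fun k => 1 / (k : ℝ)) k
      = ∑ k ∈ Icc 1 n with k ∈ Set.Icc (3 * L / 4) L, 1 / (k : ℝ) := by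
        simp only [Set.indicator_apply, sum_filter]
    _ ≤ ∑ k ∈ Icc (max 1 (3 * L / 4)) L, 1 / (k : ℝ) := by
        refine sum_le_sum_of_subset_of_nonneg (fun k hk => ?_) fun k _ _ => by positivity
        simp only [mem_filter, mem_Icc, Set.mem_Icc] at hk ⊢
        exact ⟨max_le hk.1.1 hk.2.1, hk.2.2⟩
    _ ≤ 3 := sum_one_div_Icc_max_le_three L

lemma sum_indicator_iUnion_Icc_le (L : ℕ → ℕ) (n : ℕ) (s : Finset ℕ)
    (hs : ∀ h, 3 * L h / 4 ≤ n → h ∈ s) :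
    ∑ k ∈ Icc 1 n, (⋃ h ≥ 1, Set.Icc (3 * L h / 4) (L h)).indicator
      (fun k => 1 / (k : ℝ)) k ≤ 3 * #s := by
  have hf : ∀ k : ℕ, 0 ≤ 1 / (k : ℝ) := fun k => by positivity
  calc _ ≤ ∑ k ∈ Icc 1 n, ∑ h ∈ s,
          (Set.Icc (3 * L h / 4) (L h)).indicator (fun k => 1 / (k : ℝ)) k := by
        refine sum_le_sum fun k hk => ?_
        by_cases hkB : k ∈ ⋃ h ≥ 1, Set.Icc (3 * L h / 4) (L h)
        · obtain ⟨h, -, hkh⟩ := Set.mem_iUnion₂.1 hkB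
          rw [Set.indicator_of_mem hkB, ← Set.indicator_of_mem hkh (fun k => 1 / (k : ℝ))]
          exact single_le_sum (f := fun h => (Set.Icc (3 * L h / 4) (L h)).indicator _ k)
            (fun h _ => Set.indicator_nonneg (fun k _ => hf k) k)
            (hs h (hkh.1.trans (mem_Icc.1 hk).2))
        · rw [Set.indicator_of_notMem hkB]
          exact sum_nonneg fun h _ => Set.indicator_nonneg (fun k _ => hf k) k
    _ = ∑ h ∈ s, ∑ k ∈ Icc 1 n,
          (Set.Icc (3 * L h / 4) (L h)).indicator (fun k => 1 / (k : ℝ)) k := sum_comm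
    _ ≤ ∑ _h ∈ s, (3 : ℝ) := sum_le_sum fun h _ => sum_indicator_Icc_le_three (L h) n
    _ = 3 * #s := by rw [sum_const, nsmul_eq_mul, mul_comm]

lemma lt_of_exp_le_of_div_four_le {L : ℕ → ℕ} {M : ℝ} {h₀ n h : ℕ} (hM : 0 < M)
    (hL : ∀ h ≥ h₀, exp (M * h) ≤ L h) (hn : 1 ≤ n) (hh : 3 * L h / 4 ≤ n) :
    h < h₀ + ⌊log (3 * n) / M⌋₊ + 1 := by
  rcases lt_or_ge h h₀ with hlt | hge
  · omega
  have hL3n : exp (M * h) ≤ 3 * n :=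
    (hL h hge).trans (by exact_mod_cast (by omega : L h ≤ 3 * n))
  have hMh : M * h ≤ log (3 * n) := (le_log_iff_exp_le (by positivity)).2 hL3n
  have : h ≤ ⌊log (3 * n) / M⌋₊ := Nat.le_floor ((le_div_iff₀ hM).2 (by linarith))
  omega

lemma tendsto_div_log_of_le_add_mul_log {f : ℕ → ℝ} (hf₀ : ∀ n, 0 ≤ f n)
    (hf : ∀ c > 0, ∃ C, ∀ n ≥ 1, f n ≤ C + c * log n) :
    Tendsto (fun n => f n / log n) atTop (nhds 0) := by
  refine (Asymptotics.isLittleO_iff.2 fun c hc => ?_).tendsto_div_nhds_zero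
  obtain ⟨C, hC⟩ := hf (c / 2) (by positivity)
  have hlog : Tendsto (fun n : ℕ => log n) atTop atTop :=
    tendsto_log_atTop.comp tendsto_natCast_atTop_atTop
  filter_upwards [eventually_ge_atTop 1, hlog.eventually_ge_atTop (max 0 (2 * C / c))]
    with n hn hlogn
  have hlog₀ : 0 ≤ log n := (le_max_left _ _).trans hlogn
  have hClog : 2 * C ≤ log n * c := (div_le_iff₀ hc).1 ((le_max_right _ _).trans hlogn)
  rw [norm_of_nonneg (hf₀ n), norm_of_nonneg hlog₀]
  linarith [hC n hn]

theorem tendsto_sum_indicator_iUnion_Icc_div_log (L : ℕ → ℕ)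
    (hL : ∀ M : ℝ, ∀ᶠ h : ℕ in atTop, exp (M * h) ≤ L h) :
    Tendsto (fun n : ℕ =>
        (∑ k ∈ Icc 1 n, (⋃ h ≥ 1, Set.Icc (3 * L h / 4) (L h)).indicator
          (fun k => 1 / (k : ℝ)) k) / log n) atTop (nhds 0) := by
  refine tendsto_div_log_of_le_add_mul_log
    (fun n => sum_nonneg fun k _ => Set.indicator_nonneg (fun k _ => by positivity) k)
    fun c hc => ?_
  obtain ⟨h₀, hh₀⟩ := (hL (3 / c)).exists_forall_of_atTop
  refine ⟨3 * (h₀ + 1) + c * log 3, fun n hn => ?_⟩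
  have hn' : (0 : ℝ) < n := by exact_mod_cast hn
  calc _ ≤ 3 * (#(range (h₀ + ⌊log (3 * n) / (3 / c)⌋₊ + 1)) : ℝ) :=
        sum_indicator_iUnion_Icc_le L n _ fun h hh =>
          mem_range.2 (lt_of_exp_le_of_div_four_le (by positivity) hh₀ hn hh)
    _ ≤ 3 * (h₀ + log (3 * n) / (3 / c) + 1) := by
        rw [card_range]
        push_cast
        gcongr
        have h3n : (1 : ℝ) ≤ 3 * n := by exact_mod_cast (by omega : 1 ≤ 3 * n)
        exact Nat.floor_le (div_nonneg (log_nonneg h3n) (by positivity))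
    _ = 3 * (h₀ + 1) + c * log 3 + c * log n := by
        rw [log_mul (by norm_num) hn'.ne']
        field_simp
        ring

lemma eventually_exp_mul_le_mul_exp {r : ℕ → ℝ}
    (hr : Tendsto (fun h : ℕ => r h / h) atTop atTop) {c : ℝ} (hc : 0 < c) (M : ℝ) :
    ∀ᶠ h : ℕ in atTop, exp (M * h) ≤ c * exp (r h) := by
  filter_upwards [hr.eventually_ge_atTop (M + |log c|), eventually_ge_atTop 1] with h hrh hh
  have hh' : (1 : ℝ) ≤ h := by exact_mod_cast hh
  have hMr : M * h + |log c| ≤ r h := by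
    have := (le_div_iff₀ (by linarith)).1 hrh
    nlinarith [abs_nonneg (log c)]
  calc exp (M * h) ≤ exp (log c + r h) := exp_le_exp.2 (by linarith [neg_abs_le (log c)])
    _ = c * exp (r h) := by rw [exp_add, exp_log hc]

end

theorem exceptional_set_zero_log_density_abstract_general (β : ℝ) (hβ : 0 < β)
    (r : ℕ → ℝ)
    (hsuper : Tendsto (fun h : ℕ => r h / h) atTop atTop)
    (Lh : ℕ → ℕ) (hLh : ∀ h, Lh h = ⌈5 * β * Real.exp (r h)⌉₊)
    (B : Set ℕ) (hB : B = ⋃ h ≥ 1, Set.Icc (3 * Lh h / 4) (Lh h)) :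
    Tendsto (fun n : ℕ =>
        (∑ k ∈ Finset.Icc 1 n, Set.indicator B (fun k => 1 / (k : ℝ)) k) / Real.log n)
      atTop (nhds 0) := by
  subst hB
  refine tendsto_sum_indicator_iUnion_Icc_div_log Lh fun M => ?_
  filter_upwards [eventually_exp_mul_le_mul_exp hsuper (by positivity : 0 < 5 * β) M] with h hh
  exact hh.trans (hLh h ▸ Nat.le_ceil _)

/-- If `r(h) = -log π(h)` for a probability sequence `π(h)` is superlinear
(`r(h)/h → ∞`), and `L_h = ⌈5β e^{r(h)}⌉`, then `B = ⋃_{h≥1} ℕ ∩ [3L_h/4, L_h]` satisfies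
`Σ_{k ∈ B ∩ [1,n]} 1/k = o(log n)`. -/
theorem exceptional_set_zero_log_density_abstract (β : ℝ) (hβ : 0 < β)
    (π : ℕ → ℝ) (r : ℕ → ℝ)
    (hπ : ∀ h, 0 < π h ∧ π h ≤ 1)
    (hr : ∀ h, r h = -Real.log (π h))
    (hsuper : Tendsto (fun h : ℕ => r h / h) atTop atTop)
    (Lh : ℕ → ℕ) (hLh : ∀ h, Lh h = ⌈5 * β * Real.exp (r h)⌉₊)
    (B : Set ℕ) (hB : B = ⋃ h ≥ 1, Set.Icc (3 * Lh h / 4) (Lh h)) :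
    Tendsto (fun n : ℕ =>
        (∑ k ∈ Finset.Icc 1 n, Set.indicator B (fun k => 1 / (k : ℝ)) k) / Real.log n)
      atTop (nhds 0) :=
  exceptional_set_zero_log_density_abstract_general β hβ r hsuper Lh hLh B hB
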